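/- arXiv:2409.09519 — 2 statements merged into one kernel-verified Lean document; each statement's English description precedes it below -/
import Mathlib

section
/- Let m > 0, γ > 0, ν > 0, and let g : [0,∞) → ℝ be bounded and continuous. Then lim_{ε→0⁺} ∫₀^∞ (mε)^{−1/2} · exp(−(γ + √(γ² + 4ν/(mε)))·s/2) · g(s) ds = ν^{−1/2} · g(0). In other words, the kernel s ↦ (mε)^{−1/2}·exp(−(γ+Γ_ε)s/2) with Γ_ε = √(γ² + 4ν/(mε)) converges, as ε → 0⁺, to ν^{−1/2} times the Dirac delta at 0. -/
/-!
With `L = (γ + Γ_ε)/2`, the substitution `u = L s` turns the integral into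
`(√(mε) L)⁻¹ ∫₀^∞ e^{-u} g(u/L) du`. As `ε → 0⁺` we have `L → ∞`, so by dominated convergence
(with dominating function `M e^{-u}`) the integral tends to `g 0`, while
`√(mε) L = (γ √(mε) + √(mεγ² + 4ν))/2 → √ν`.
-/

open Filter MeasureTheory Topology Set Real

section LaplaceKernel

variable {E : Type*} [NormedAddCommGroup E] [NormedSpace ℝ E] {g : ℝ → E}

theorem integral_Ioi_mul_exp_neg_mul_smul_eq {L : ℝ} (hL : 0 < L) :
    ∫ s in Ioi 0, (L * exp (-(L * s))) • g s = ∫ u in Ioi 0, exp (-u) • g (u / L) := by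
  have h := integral_comp_mul_left_Ioi' (fun u => exp (-u) • g (u / L)) 0 hL
  rw [mul_zero] at h
  rw [← h, ← integral_smul]
  refine setIntegral_congr_fun measurableSet_Ioi fun s _ => ?_
  rw [smul_smul, mul_div_cancel_left₀ s hL.ne']

theorem tendsto_integral_Ioi_exp_neg_smul_comp_div [CompleteSpace E]
    (hgc : ContinuousOn g (Ici 0)) (hgb : ∃ M, ∀ s ≥ 0, ‖g s‖ ≤ M) :
    Tendsto (fun L => ∫ u in Ioi 0, exp (-u) • g (u / L)) atTop (𝓝 (g 0)) := by
  obtain ⟨M, hM⟩ := hgb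
  have hlim : ∫ u in Ioi (0 : ℝ), exp (-u) • g 0 = g 0 := by
    rw [integral_smul_const, integral_exp_neg_Ioi_zero, one_smul]
  rw [← hlim]
  refine tendsto_integral_filter_of_dominated_convergence (fun u => M * exp (-u)) ?_ ?_
    ((integrableOn_exp_neg_Ioi 0).const_mul M) ?_
  · filter_upwards [eventually_gt_atTop 0] with L hL
    refine ContinuousOn.aestronglyMeasurable ?_ measurableSet_Ioi
    exact (continuous_exp.comp continuous_neg).continuousOn.smul
      (hgc.comp (continuousOn_id.div_const L) fun u hu => div_nonneg (le_of_lt hu) hL.le)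
  · filter_upwards [eventually_gt_atTop 0] with L hL
    filter_upwards [self_mem_ae_restrict measurableSet_Ioi] with u hu
    rw [norm_smul, norm_of_nonneg (exp_pos _).le, mul_comm]
    exact mul_le_mul_of_nonneg_right (hM _ (div_nonneg (le_of_lt hu) hL.le)) (exp_pos _).le
  · filter_upwards [self_mem_ae_restrict measurableSet_Ioi] with u hu
    have hdiv : Tendsto (fun L => u / L) atTop (𝓝[≥] 0) :=
      tendsto_nhdsWithin_iff.mpr ⟨tendsto_const_nhds.div_atTop tendsto_id,
        eventually_gt_atTop 0 |>.mono fun L hL => div_nonneg (le_of_lt hu) hL.le⟩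
    exact ((hgc 0 self_mem_Ici).tendsto.comp hdiv).const_smul _

theorem tendsto_integral_Ioi_mul_exp_neg_mul_smul [CompleteSpace E]
    (hgc : ContinuousOn g (Ici 0)) (hgb : ∃ M, ∀ s ≥ 0, ‖g s‖ ≤ M) :
    Tendsto (fun L => ∫ s in Ioi 0, (L * exp (-(L * s))) • g s) atTop (𝓝 (g 0)) :=
  (tendsto_integral_Ioi_exp_neg_smul_comp_div hgc hgb).congr'
    (eventually_gt_atTop 0 |>.mono fun _ hL => (integral_Ioi_mul_exp_neg_mul_smul_eq hL).symm)

end LaplaceKernel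

/-- The rate `(γ + Γ_ε)/2` in the exponent of the kernel. -/
noncomputable def fastDecayRate (m γ ν ε : ℝ) : ℝ := (γ + √(γ ^ 2 + 4 * ν / (m * ε))) / 2

section FastDecayRate

variable {m ν : ℝ} (γ : ℝ)

theorem tendsto_fastDecayRate_atTop (hm : 0 < m) (hν : 0 < ν) :
    Tendsto (fastDecayRate m γ ν) (𝓝[>] 0) atTop := by
  have hinv : Tendsto (fun ε => 4 * ν / (m * ε)) (𝓝[>] 0) atTop := by
    refine (tendsto_inv_nhdsGT_zero.const_mul_atTop (by positivity : 0 < 4 * ν / m)).congr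
      fun ε => ?_
    rw [div_mul_eq_div_div, div_eq_mul_inv _ ε]
  have hsqrt := tendsto_sqrt_atTop.comp (tendsto_atTop_add_const_left _ (γ ^ 2) hinv)
  exact (tendsto_atTop_add_const_left _ γ hsqrt).atTop_div_const two_pos

theorem sqrt_mul_mul_fastDecayRate (hm : 0 < m) {ε : ℝ} (hε : 0 < ε) :
    √(m * ε) * fastDecayRate m γ ν ε = (γ * √(m * ε) + √(m * ε * γ ^ 2 + 4 * ν)) / 2 := by
  have hmε : 0 < m * ε := mul_pos hm hε
  have hprod : √(m * ε) * √(γ ^ 2 + 4 * ν / (m * ε)) = √(m * ε * γ ^ 2 + 4 * ν) := by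
    rw [← sqrt_mul hmε.le, mul_add, mul_div_cancel₀ _ hmε.ne']
  rw [fastDecayRate, ← hprod]
  ring

theorem tendsto_sqrt_mul_mul_fastDecayRate (hm : 0 < m) :
    Tendsto (fun ε => √(m * ε) * fastDecayRate m γ ν ε) (𝓝[>] 0) (𝓝 √ν) := by
  have hcont : Continuous fun ε => (γ * √(m * ε) + √(m * ε * γ ^ 2 + 4 * ν)) / 2 := by
    fun_prop
  have h0 : (γ * √(m * 0) + √(m * 0 * γ ^ 2 + 4 * ν)) / 2 = √ν := by
    simp only [mul_zero, zero_mul, sqrt_zero, zero_add, sqrt_mul zero_le_four]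
    norm_num
  refine (h0 ▸ hcont.tendsto 0 |>.mono_left nhdsWithin_le_nhds).congr' ?_
  filter_upwards [self_mem_nhdsWithin] with ε hε
  exact (sqrt_mul_mul_fastDecayRate γ hm hε).symm

end FastDecayRate

theorem kernel_tendsto_delta_general
    (m γ ν : ℝ) (hm : 0 < m) (hν : 0 < ν)
    (g : ℝ → ℝ)
    (hgc : ContinuousOn g (Set.Ici 0))
    (hgb : ∃ M : ℝ, ∀ s ≥ (0 : ℝ), |g s| ≤ M) :
    Tendsto
      (fun ε : ℝ =>
        ∫ s in Set.Ioi (0 : ℝ),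
          (Real.sqrt (m * ε))⁻¹ *
            Real.exp (-(γ + Real.sqrt (γ ^ 2 + 4 * ν / (m * ε))) * s / 2) * g s)
      (nhdsWithin 0 (Set.Ioi 0))
      (nhds ((Real.sqrt ν)⁻¹ * g 0)) := by
  have hL := tendsto_fastDecayRate_atTop γ hm hν
  have hpeak := (tendsto_integral_Ioi_mul_exp_neg_mul_smul hgc hgb).comp hL
  have hscale := (tendsto_sqrt_mul_mul_fastDecayRate γ hm).inv₀ (sqrt_pos.2 hν).ne'
  refine (hscale.mul hpeak).congr' ?_
  filter_upwards [self_mem_nhdsWithin, hL.eventually_gt_atTop 0] with ε hε hLpos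
  have hsqrt : √(m * ε) ≠ 0 := (sqrt_pos.2 (mul_pos hm hε)).ne'
  rw [Function.comp_apply, ← integral_const_mul]
  refine setIntegral_congr_fun measurableSet_Ioi fun s _ => ?_
  have harg : -(γ + √(γ ^ 2 + 4 * ν / (m * ε))) * s / 2 = -(fastDecayRate m γ ν ε * s) := by
    rw [fastDecayRate]
    ring
  rw [harg, smul_eq_mul]
  field_simp [hLpos.ne']

/-- Timescale-separation limit: as `ε → 0⁺`, the kernel
`s ↦ (mε)^{-1/2}·exp(-(γ + √(γ² + 4ν/(mε)))·s/2)` acts on a bounded continuous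
function `g` on `[0,∞)` like `ν^{-1/2}` times the Dirac delta at `0`. -/
theorem kernel_tendsto_delta
    (m γ ν : ℝ) (hm : 0 < m) (hγ : 0 < γ) (hν : 0 < ν)
    (g : ℝ → ℝ)
    (hgc : ContinuousOn g (Set.Ici 0))
    (hgb : ∃ M : ℝ, ∀ s ≥ (0 : ℝ), |g s| ≤ M) :
    Tendsto
      (fun ε : ℝ =>
        ∫ s in Set.Ioi (0 : ℝ),
          (Real.sqrt (m * ε))⁻¹ *
            Real.exp (-(γ + Real.sqrt (γ ^ 2 + 4 * ν / (m * ε))) * s / 2) * g s)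
      (nhdsWithin 0 (Set.Ioi 0))
      (nhds ((Real.sqrt ν)⁻¹ * g 0)) :=
  kernel_tendsto_delta_general m γ ν hm hν g hgc hgb
end

section
/- Let N = n_S + n_F and let J be a real symmetric N×N matrix with nonnegative off-diagonal entries, J·1_N = 0, partitioned into blocks J_SS, J_SF, J_FS = J_SFᵀ, J_FF, and suppose J_FF is negative definite. Then the off-diagonal entries of the Kron-reduced matrix J_red = J_SS − J_SF·J_FF⁻¹·J_FS are nonnegative; together with J_red·1_{n_S} = 0 and symmetry, this means that −J_red is again a Laplacian matrix. -/
/-!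
A positive definite matrix `A` with nonpositive off-diagonal entries is inverse-positive: if
`A x ≥ 0`, the negative part `d = x⁻` satisfies `dᵀ A d = dᵀ A x⁺ - dᵀ A x ≤ 0`, because `d` and
`x⁺` have disjoint supports, so `d = 0`. Applied to `-J_FF` this gives `J_FF⁻¹ ≤ 0` entrywise, so
off the diagonal `J_red = J_SS + J_SF (-J_FF)⁻¹ J_FS` is a sum of nonnegative terms. Zero row sums
survive because eliminating the fast block from `J 1 = 0` gives `J_red 1 = 0`, and symmetry
because `J_red` is built symmetrically from the blocks of a symmetric `J`.
-/

open Matrix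

namespace Matrix

variable {m n R : Type*} [Fintype n]

lemma dotProduct_mulVec_nonpos_of_offDiag_nonpos [CommRing R] [LinearOrder R]
    [IsStrictOrderedRing R] {A : Matrix n n R} (hA : ∀ i j, i ≠ j → A i j ≤ 0)
    {u v : n → R} (hu : 0 ≤ u) (hv : 0 ≤ v) (huv : ∀ i, u i * v i = 0) :
    u ⬝ᵥ A *ᵥ v ≤ 0 := by
  simp only [dotProduct, mulVec, Finset.mul_sum]
  refine Finset.sum_nonpos fun i _ => Finset.sum_nonpos fun j _ => ?_
  rcases eq_or_ne i j with rfl | hij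
  · rw [mul_left_comm, huv i, mul_zero]
  · exact mul_nonpos_of_nonneg_of_nonpos (hu i)
      (mul_nonpos_of_nonpos_of_nonneg (hA i j hij) (hv j))

lemma PosDef.nonneg_of_mulVec_nonneg {A : Matrix n n ℝ} (hA : A.PosDef)
    (hoff : ∀ i j, i ≠ j → A i j ≤ 0) {x : n → ℝ} (hx : 0 ≤ A *ᵥ x) : 0 ≤ x := by
  have hsplit : A *ᵥ x = A *ᵥ x⁺ - A *ᵥ x⁻ := by rw [← mulVec_sub, posPart_sub_negPart]
  have hdisj : ∀ i, x⁻ i * x⁺ i = 0 := fun i => by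
    rcases le_total (x i) 0 with h | h <;> simp [h]
  have hquad : x⁻ ⬝ᵥ A *ᵥ x⁻ ≤ 0 := by
    have hcross := dotProduct_mulVec_nonpos_of_offDiag_nonpos hoff
      (negPart_nonneg x) (posPart_nonneg x) hdisj
    have hrhs : 0 ≤ x⁻ ⬝ᵥ A *ᵥ x := dotProduct_nonneg_of_nonneg (negPart_nonneg x) hx
    rw [hsplit, dotProduct_sub] at hrhs
    linarith
  have hneg : x⁻ = 0 := by
    by_contra hne
    have hpos := hA.dotProduct_mulVec_pos hne
    rw [star_trivial] at hpos
    linarith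
  rw [← posPart_sub_negPart x, hneg, sub_zero]
  exact posPart_nonneg x

variable [DecidableEq n]

lemma PosDef.inv_apply_nonneg {A : Matrix n n ℝ} (hA : A.PosDef)
    (hoff : ∀ i j, i ≠ j → A i j ≤ 0) (i j : n) : 0 ≤ A⁻¹ i j := by
  have hdet : IsUnit A.det := (isUnit_iff_isUnit_det A).mp hA.isUnit
  have hcol : 0 ≤ A⁻¹ *ᵥ Pi.single j 1 := by
    refine hA.nonneg_of_mulVec_nonneg hoff ?_
    rw [mulVec_mulVec, mul_nonsing_inv A hdet, one_mulVec]
    exact Pi.single_nonneg.mpr zero_le_one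
  simpa [mulVec_single_one] using hcol i

section kronReduction

variable [CommRing R]

noncomputable def kronReduction (A : Matrix m m R) (B : Matrix m n R) (C : Matrix n m R)
    (D : Matrix n n R) : Matrix m m R :=
  A - B * D⁻¹ * C

variable {A : Matrix m m R} {B : Matrix m n R} {C : Matrix n m R} {D : Matrix n n R}

lemma kronReduction_isSymm (h : (fromBlocks A B C D).IsSymm) :
    (kronReduction A B C D).IsSymm := by
  obtain ⟨hA, hBC, hCB, hD⟩ := isSymm_fromBlocks_iff.mp h
  rw [kronReduction, IsSymm, transpose_sub, transpose_mul, transpose_mul, transpose_nonsing_inv,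
    hA.eq, hCB, hBC, hD.eq, ← Matrix.mul_assoc]

lemma kronReduction_mulVec_eq_zero [Fintype m] {u : m → R} {v : n → R} (hD : IsUnit D.det)
    (h : fromBlocks A B C D *ᵥ Sum.elim u v = 0) : kronReduction A B C D *ᵥ u = 0 := by
  have hslow : A *ᵥ u + B *ᵥ v = 0 := funext fun i => by
    simpa [fromBlocks_mulVec] using congrFun h (Sum.inl i)
  have hfast : C *ᵥ u + D *ᵥ v = 0 := funext fun k => by
    simpa [fromBlocks_mulVec] using congrFun h (Sum.inr k)
  have helim : D⁻¹ *ᵥ C *ᵥ u = -v := by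
    rw [eq_neg_of_add_eq_zero_left hfast, mulVec_neg, mulVec_mulVec, nonsing_inv_mul D hD,
      one_mulVec]
  rw [kronReduction, sub_mulVec, ← mulVec_mulVec, ← mulVec_mulVec, helim, mulVec_neg,
    sub_neg_eq_add, hslow]

end kronReduction

lemma kronReduction_apply_nonneg {A : Matrix m m ℝ} {B : Matrix m n ℝ} {C : Matrix n m ℝ}
    {D : Matrix n n ℝ} (hoff : ∀ i j, i ≠ j → 0 ≤ fromBlocks A B C D i j)
    (hD : (-D).PosDef) {i j : m} (hij : i ≠ j) : 0 ≤ kronReduction A B C D i j := by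
  have hdet : IsUnit D.det := by
    simpa [isUnit_iff_isUnit_det] using hD.isUnit
  have hinv : (-D)⁻¹ = -D⁻¹ := inv_eq_left_inv (by rw [neg_mul_neg, nonsing_inv_mul D hdet])
  have hB : ∀ i k, 0 ≤ B i k := fun i k => by simpa using hoff (Sum.inl i) (Sum.inr k) (by simp)
  have hC : ∀ k j, 0 ≤ C k j := fun k j => by simpa using hoff (Sum.inr k) (Sum.inl j) (by simp)
  have hDinv : ∀ k l, 0 ≤ (-D)⁻¹ k l := hD.inv_apply_nonneg fun k l hkl => by
    simpa using hoff (Sum.inr k) (Sum.inr l) (by simpa using hkl)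
  have hprod : 0 ≤ (B * (-D)⁻¹ * C) i j :=
    Finset.sum_nonneg fun l _ => mul_nonneg
      (Finset.sum_nonneg fun k _ => mul_nonneg (hB i k) (hDinv k l)) (hC l j)
  have hA : 0 ≤ A i j := by simpa using hoff (Sum.inl i) (Sum.inl j) (by simpa using hij)
  rw [hinv, Matrix.mul_neg, Matrix.neg_mul, neg_apply] at hprod
  rw [kronReduction, sub_apply]
  linarith

end Matrix

theorem kron_reduction_laplacian_general
    (nS nF : ℕ)
    (Jss : Matrix (Fin nS) (Fin nS) ℝ) (Jsf : Matrix (Fin nS) (Fin nF) ℝ)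
    (Jfs : Matrix (Fin nF) (Fin nS) ℝ) (Jff : Matrix (Fin nF) (Fin nF) ℝ)
    (hsym : (Matrix.fromBlocks Jss Jsf Jfs Jff).IsSymm)
    (hoff : ∀ i j : Fin nS ⊕ Fin nF, i ≠ j →
      0 ≤ Matrix.fromBlocks Jss Jsf Jfs Jff i j)
    (hones : (Matrix.fromBlocks Jss Jsf Jfs Jff) *ᵥ (fun _ => (1 : ℝ)) = 0)
    (hnd : (-Jff).PosDef) :
    (∀ i j : Fin nS, i ≠ j → 0 ≤ (Jss - Jsf * Jff⁻¹ * Jfs) i j) ∧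
    (Jss - Jsf * Jff⁻¹ * Jfs) *ᵥ (fun _ => (1 : ℝ)) = 0 ∧
    (Jss - Jsf * Jff⁻¹ * Jfs).IsSymm := by
  have hdet : IsUnit Jff.det := by
    simpa [isUnit_iff_isUnit_det] using hnd.isUnit
  refine ⟨fun i j hij => kronReduction_apply_nonneg hoff hnd hij,
    kronReduction_mulVec_eq_zero (v := fun _ => 1) hdet ?_, kronReduction_isSymm hsym⟩
  convert hones using 2
  exact Sum.elim_const_const 1

/-- The Kron reduction of (the negative of) a Laplacian matrix is again (the
negative of) a Laplacian matrix: if `J` is symmetric with nonnegative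
off-diagonal entries and zero row sums, and its fast-fast block `J_FF` is
negative definite, then `J_red = J_SS − J_SF·J_FF⁻¹·J_SFᵀ` is symmetric, has
nonnegative off-diagonal entries and zero row sums. -/
theorem kron_reduction_laplacian
    (nS nF : ℕ)
    (Jss : Matrix (Fin nS) (Fin nS) ℝ) (Jsf : Matrix (Fin nS) (Fin nF) ℝ)
    (Jfs : Matrix (Fin nF) (Fin nS) ℝ) (Jff : Matrix (Fin nF) (Fin nF) ℝ)
    (hfs : Jfs = Jsfᵀ)
    (hsym : (Matrix.fromBlocks Jss Jsf Jfs Jff).IsSymm)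
    (hoff : ∀ i j : Fin nS ⊕ Fin nF, i ≠ j →
      0 ≤ Matrix.fromBlocks Jss Jsf Jfs Jff i j)
    (hones : (Matrix.fromBlocks Jss Jsf Jfs Jff) *ᵥ (fun _ => (1 : ℝ)) = 0)
    (hnd : (-Jff).PosDef) :
    (∀ i j : Fin nS, i ≠ j → 0 ≤ (Jss - Jsf * Jff⁻¹ * Jfs) i j) ∧
    (Jss - Jsf * Jff⁻¹ * Jfs) *ᵥ (fun _ => (1 : ℝ)) = 0 ∧
    (Jss - Jsf * Jff⁻¹ * Jfs).IsSymm :=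
  kron_reduction_laplacian_general nS nF Jss Jsf Jfs Jff hsym hoff hones hnd
end
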